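/- arXiv:2011.08541 — 2 statements merged into one kernel-verified Lean document; each statement's English description precedes it below -/
import Mathlib

section
/- Let R : S → A → S → ℝ be a reward function, γ ∈ ℝ a discount factor, and φ : S → ℝ a potential, and let R̂ be the potential-based shaping of R by φ. Let τ be an expert trajectory of length L and (τ_j)_{j=1}^M a finite family of trajectories of length L which have the same starting state as τ and additionally the same end state as τ. Then the ρ-projections agree exactly: ρ_τ(R̂) = ρ_τ(R). -/
/-- The discounted reward of a trajectory `(s, a)` of length `L`:
`R(τ) = ∑_{t=0}^{L-1} γ^t · R(s_t, a_t, s_{t+1})`. -/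
noncomputable def discReward {S A : Type*} (R : S → A → S → ℝ) (γ : ℝ) (L : ℕ)
    (s : Fin (L + 1) → S) (a : Fin L → A) : ℝ :=
  ∑ t : Fin L, γ ^ (t : ℕ) * R (s t.castSucc) (a t) (s t.succ)

/-- The ρ-projection of a reward function `R`, given an expert trajectory `(s, a)` of
length `L` and a family of `M` trajectories `(s' j, a' j)` of length `L`:
`ρ_τ(R) = exp(R(τ)) / (exp(R(τ)) + ∑_{j=1}^M exp(R(τ_j)))`. -/
noncomputable def rhoProj {S A : Type*} (γ : ℝ) (L M : ℕ)
    (s : Fin (L + 1) → S) (a : Fin L → A)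
    (s' : Fin M → Fin (L + 1) → S) (a' : Fin M → Fin L → A)
    (R : S → A → S → ℝ) : ℝ :=
  Real.exp (discReward R γ L s a) /
    (Real.exp (discReward R γ L s a) +
      ∑ j : Fin M, Real.exp (discReward R γ L (s' j) (a' j)))

/-! Shaping adds the telescoping term `γ ^ L * φ (s L) - φ (s 0)` to the discounted reward of
every trajectory. When all trajectories share both endpoints this is a common shift `c`, and the
factor `exp c` cancels from numerator and denominator of the ρ-projection. -/

theorem Fin.sum_succ_sub_castSucc {G : Type*} [AddCommGroup G] {n : ℕ} (f : Fin (n + 1) → G) :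
    ∑ i : Fin n, (f i.succ - f i.castSucc) = f (Fin.last n) - f 0 := by
  induction n with
  | zero => simp
  | succ n ih =>
    simp only [Fin.sum_univ_castSucc, Fin.succ_castSucc]
    rw [ih (fun i => f i.castSucc), Fin.succ_last, Fin.castSucc_zero]
    abel

theorem discReward_add_shaping {S A : Type*} (R : S → A → S → ℝ) (γ : ℝ) (φ : S → ℝ)
    (L : ℕ) (s : Fin (L + 1) → S) (a : Fin L → A) :
    discReward (fun x y z => R x y z + γ * φ z - φ x) γ L s a =
      discReward R γ L s a + (γ ^ L * φ (s (Fin.last L)) - φ (s 0)) := by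
  have htel := Fin.sum_succ_sub_castSucc fun t : Fin (L + 1) => γ ^ (t : ℕ) * φ (s t)
  simp only [Fin.val_succ, Fin.val_castSucc, Fin.val_last, Fin.val_zero, pow_zero,
    one_mul] at htel
  rw [discReward, discReward, ← htel, ← Finset.sum_add_distrib]
  congr 1 with t
  ring

theorem rhoProj_eq_of_discReward_eq_add {S A : Type*} {R R' : S → A → S → ℝ} {γ : ℝ}
    {L M : ℕ} {s : Fin (L + 1) → S} {a : Fin L → A}
    {s' : Fin M → Fin (L + 1) → S} {a' : Fin M → Fin L → A} {c : ℝ}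
    (hexpert : discReward R' γ L s a = discReward R γ L s a + c)
    (hfamily : ∀ j, discReward R' γ L (s' j) (a' j) = discReward R γ L (s' j) (a' j) + c) :
    rhoProj γ L M s a s' a' R' = rhoProj γ L M s a s' a' R := by
  simp only [rhoProj, hexpert, hfamily, Real.exp_add, ← Finset.sum_mul, ← add_mul]
  exact mul_div_mul_right _ _ (Real.exp_ne_zero c)

/-- If all trajectories in the family share the same starting state and the
same end state as the expert trajectory, then potential-based reward shaping leaves the
ρ-projection exactly unchanged. -/
theorem rhoProj_shaping_same_endstate {S A : Type*} (R : S → A → S → ℝ) (γ : ℝ)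
    (φ : S → ℝ) (L M : ℕ) (s : Fin (L + 1) → S) (a : Fin L → A)
    (s' : Fin M → Fin (L + 1) → S) (a' : Fin M → Fin L → A)
    (hstart : ∀ j : Fin M, s' j 0 = s 0)
    (hend : ∀ j : Fin M, s' j (Fin.last L) = s (Fin.last L)) :
    rhoProj γ L M s a s' a' (fun x y z => R x y z + γ * φ z - φ x) =
      rhoProj γ L M s a s' a' R :=
  rhoProj_eq_of_discReward_eq_add (discReward_add_shaping R γ φ L s a) fun j => by
    rw [discReward_add_shaping, hstart, hend]
end

section
/- Let R : S → A → S → ℝ be a reward function, γ ∈ ℝ a discount factor, and φ : S → ℝ a potential, and let R̂ be the potential-based shaping of R by φ. Let τ be an expert trajectory of length L with end state s_L, and let (τ_j)_{j=1}^M be a finite family of trajectories of length L with the same starting state as τ, where τ_j has end state s^j_L. Then ρ_τ(R̂) = exp(R(τ)) / (exp(R(τ)) + ∑_{j=1}^M exp(R(τ_j) + γ^L · (φ(s^j_L) − φ(s_L)))). -/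
/-!
Shaping adds `γ^t (γ φ(s_{t+1}) - φ(s_t))` to the `t`-th discounted term, and these telescope,
so the shaped reward of a trajectory is its reward plus `γ^L φ(s_L) - φ(s_0)`. All trajectories
start at `s_0`, so subtracting the expert's shift `γ^L φ(s_L) - φ(s_0)` from every exponent leaves
the ρ-projection unchanged.
-/

theorem Fin.sum_univ_succ_sub_castSucc {G : Type*} [AddCommGroup G] :
    ∀ {n : ℕ} (f : Fin (n + 1) → G),
      ∑ i : Fin n, (f i.succ - f i.castSucc) = f (Fin.last n) - f 0
  | 0, f => by simp
  | n + 1, f => by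
    rw [Fin.sum_univ_castSucc]
    simp only [Fin.succ_castSucc]
    rw [Fin.sum_univ_succ_sub_castSucc (fun i => f i.castSucc)]
    simp only [Fin.castSucc_zero, Fin.succ_last]
    abel

section DiscountedReward

variable {S A : Type*} (γ : ℝ) (L : ℕ) (s : Fin (L + 1) → S) (a : Fin L → A)

theorem discReward_add (R₁ R₂ : S → A → S → ℝ) :
    discReward (fun x y z => R₁ x y z + R₂ x y z) γ L s a =
      discReward R₁ γ L s a + discReward R₂ γ L s a := by
  simp only [discReward, mul_add, Finset.sum_add_distrib]

theorem discReward_potential (φ : S → ℝ) :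
    discReward (fun x _ z => γ * φ z - φ x) γ L s a = γ ^ L * φ (s (Fin.last L)) - φ (s 0) := by
  have h := Fin.sum_univ_succ_sub_castSucc fun t : Fin (L + 1) => γ ^ (t : ℕ) * φ (s t)
  simp only [Fin.val_succ, Fin.val_castSucc, Fin.val_last, Fin.val_zero, pow_zero, one_mul] at h
  rw [discReward, ← h]
  exact Finset.sum_congr rfl fun t _ => by ring

theorem discReward_shaped (R : S → A → S → ℝ) (φ : S → ℝ) :
    discReward (fun x y z => R x y z + γ * φ z - φ x) γ L s a =
      discReward R γ L s a + (γ ^ L * φ (s (Fin.last L)) - φ (s 0)) := by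
  simp only [add_sub_assoc, discReward_add, discReward_potential]

end DiscountedReward

theorem exp_add_div_exp_add_add_sum_exp_add {ι : Type*} (t : Finset ι) (x c : ℝ) (y : ι → ℝ) :
    Real.exp (x + c) / (Real.exp (x + c) + ∑ j ∈ t, Real.exp (y j + c)) =
      Real.exp x / (Real.exp x + ∑ j ∈ t, Real.exp (y j)) := by
  simp only [Real.exp_add, ← Finset.sum_mul, ← add_mul]
  exact mul_div_mul_right _ _ (Real.exp_ne_zero c)

/-- For a family of trajectories with the same starting state as the expert
trajectory, the ρ-projection of the shaped reward `R̂` equals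
`exp(R(τ)) / (exp(R(τ)) + ∑_j exp(R(τ_j) + γ^L·(φ(s^j_L) − φ(s_L))))`. -/
theorem rhoProj_shaped_formula {S A : Type*} (R : S → A → S → ℝ) (γ : ℝ)
    (φ : S → ℝ) (L M : ℕ) (s : Fin (L + 1) → S) (a : Fin L → A)
    (s' : Fin M → Fin (L + 1) → S) (a' : Fin M → Fin L → A)
    (hstart : ∀ j : Fin M, s' j 0 = s 0) :
    rhoProj γ L M s a s' a' (fun x y z => R x y z + γ * φ z - φ x) =
      Real.exp (discReward R γ L s a) /
        (Real.exp (discReward R γ L s a) +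
          ∑ j : Fin M, Real.exp (discReward R γ L (s' j) (a' j) +
            γ ^ L * (φ (s' j (Fin.last L)) - φ (s (Fin.last L))))) := by
  rw [← exp_add_div_exp_add_add_sum_exp_add _ _ (γ ^ L * φ (s (Fin.last L)) - φ (s 0))]
  simp only [rhoProj, discReward_shaped, hstart]
  congr 3 with j
  congr 1
  ring
end
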